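/- Let h : ℝ → ℝ be nonnegative, continuous on [−τ, ∞), differentiable on [0, ∞), and satisfy h′(t) = γ(t)·h(t) + α(t)·h(t−τ)^p + β(t) for all t ≥ 0, with h(τ) > 0. Let q > 1 and define ζ(t) := [h(τ)·ν(τ) + ∫_τ^t β(ξ)·ν(ξ) dξ]/ν(t) for t ≥ τ. If α(t)·σ(t)^p·(q·ζ(t))^p ≤ (q−1)·β(t) for all t ≥ τ, then h(t) ≤ q·ζ(t) for all t ≥ τ. -/

import Mathlib

open Real MeasureTheory Set Filter

/-- `ν(t) = exp(−∫₀ᵗ γ(ξ) dξ)`. -/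
noncomputable def nu (γ : ℝ → ℝ) (t : ℝ) : ℝ := Real.exp (-∫ ξ in (0:ℝ)..t, γ ξ)

/-- `σ(t) = exp(−∫_{t−τ}^t γ(ξ) dξ)`. -/
noncomputable def sig (γ : ℝ → ℝ) (τ t : ℝ) : ℝ :=
  Real.exp (-∫ ξ in (t - τ)..t, γ ξ)

/-!
The integrating factor `ν` turns the equation into `(h ν)' = ν (α h(t-τ)^p + β) ≥ 0`, so
`h ν` is nondecreasing and the delayed value is controlled by the current one:
`h(t-τ) ≤ σ(t) h(t)`. The comparison function `w = q ζ ν - h ν` starts at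
`(q - 1) h(τ) ν(τ) > 0` and satisfies `w' = ν ((q - 1) β - α h(t-τ)^p)`. As long as `w > 0` we
have `h ≤ q ζ`, hence `α h(t-τ)^p ≤ α σ^p (q ζ)^p ≤ (q - 1) β` and `w' ≥ 0`; so `w` can never
reach `0`.
-/

theorem pos_of_hasDerivAt_nonneg_of_pos {w w' : ℝ → ℝ} {a b : ℝ}
    (hc : ContinuousOn w (Icc a b)) (hd : ∀ x ∈ Ioo a b, HasDerivAt w (w' x) x)
    (ha : 0 < w a) (hpos : ∀ x ∈ Ioo a b, 0 < w x → 0 ≤ w' x) :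
    ∀ x ∈ Icc a b, 0 < w x := by
  by_contra! hneg
  set S := Icc a b ∩ w ⁻¹' Iic 0
  have hSne : S.Nonempty := let ⟨x, hx, hwx⟩ := hneg; ⟨x, hx, hwx⟩
  have hSbdd : BddBelow S := ⟨a, fun x hx => hx.1.1⟩
  have ht₀ : sInf S ∈ S :=
    (hc.preimage_isClosed_of_isClosed isClosed_Icc isClosed_Iic).csInf_mem hSne hSbdd
  have hpos_before : ∀ x ∈ Ico a (sInf S), 0 < w x := fun x hx => by
    by_contra! hwx
    exact (csInf_le hSbdd ⟨⟨hx.1, hx.2.le.trans ht₀.1.2⟩, hwx⟩).not_gt hx.2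
  have hat₀ : a < sInf S :=
    lt_of_le_of_ne ht₀.1.1 fun h => (ht₀.2 : w (sInf S) ≤ 0).not_gt (h ▸ ha)
  have hsub : Icc a (sInf S) ⊆ Icc a b := Icc_subset_Icc le_rfl ht₀.1.2
  have hmono : MonotoneOn w (Icc a (sInf S)) := by
    refine monotoneOn_of_hasDerivWithinAt_nonneg (f' := w') (convex_Icc _ _) (hc.mono hsub)
      (fun x hx => ?_) (fun x hx => ?_) <;> rw [interior_Icc] at hx
    · exact (hd x ⟨hx.1, hx.2.trans_le ht₀.1.2⟩).hasDerivWithinAt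
    · exact hpos x ⟨hx.1, hx.2.trans_le ht₀.1.2⟩ (hpos_before x ⟨hx.1.le, hx.2⟩)
  have := hmono (left_mem_Icc.2 hat₀.le) (right_mem_Icc.2 hat₀.le) hat₀.le
  exact (ha.trans_le this).not_ge ht₀.2

section IntegratingFactor

variable {γ : ℝ → ℝ}

theorem nu_pos (γ : ℝ → ℝ) (t : ℝ) : 0 < nu γ t := exp_pos _

theorem hasDerivAt_nu (hγ : Continuous γ) (t : ℝ) :
    HasDerivAt (nu γ) (-γ t * nu γ t) t := by
  have := ((hγ.integral_hasStrictDerivAt 0 t).hasDerivAt.neg).exp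
  rw [mul_comm]
  exact this

theorem continuous_nu (hγ : Continuous γ) : Continuous (nu γ) :=
  continuous_iff_continuousAt.2 fun t => (hasDerivAt_nu hγ t).continuousAt

theorem sig_eq_nu_div_nu (hγ : Continuous γ) (τ t : ℝ) :
    sig γ τ t = nu γ t / nu γ (t - τ) := by
  rw [sig, nu, nu, ← exp_sub, ← intervalIntegral.integral_interval_sub_left
    (hγ.intervalIntegrable 0 t) (hγ.intervalIntegrable 0 (t - τ))]
  ring_nf

theorem monotoneOn_mul_nu {h h' : ℝ → ℝ} (hγ : Continuous γ) (hc : ContinuousOn h (Ici 0))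
    (hd : ∀ t, 0 < t → HasDerivAt h (h' t) t) (hge : ∀ t, 0 < t → γ t * h t ≤ h' t) :
    MonotoneOn (fun t => h t * nu γ t) (Ici 0) := by
  refine monotoneOn_of_hasDerivWithinAt_nonneg (f' := fun x => (h' x - γ x * h x) * nu γ x)
    (convex_Ici 0) (hc.mul (continuous_nu hγ).continuousOn) (fun x hx => ?_) (fun x hx => ?_)
    <;> rw [interior_Ici] at hx
  · exact (((hd x hx).mul (hasDerivAt_nu hγ x)).congr_deriv (by ring)).hasDerivWithinAt
  · exact mul_nonneg (sub_nonneg.2 (hge x hx)) (nu_pos γ x).le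

theorem le_mul_sig_of_monotoneOn {h : ℝ → ℝ} {τ t : ℝ} (hγ : Continuous γ)
    (hmono : MonotoneOn (fun t => h t * nu γ t) (Ici 0)) (hτ : 0 ≤ τ) (ht : τ ≤ t) :
    h (t - τ) ≤ h t * sig γ τ t := by
  have := hmono (mem_Ici.2 (sub_nonneg.2 ht)) (mem_Ici.2 (hτ.trans ht)) (by linarith)
  rwa [sig_eq_nu_div_nu hγ, ← mul_div_assoc, le_div_iff₀ (nu_pos γ _)]

theorem mul_delay_rpow_le {h a : ℝ → ℝ} {τ p t c r : ℝ} (hγ : Continuous γ)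
    (hmono : MonotoneOn (fun t => h t * nu γ t) (Ici 0)) (hτ : 0 ≤ τ) (ht : τ ≤ t)
    (ha : 0 ≤ a t) (hp : 0 ≤ p) (hdelay0 : 0 ≤ h (t - τ)) (h0 : 0 ≤ h t) (hc : h t ≤ c)
    (hr : a t * sig γ τ t ^ p * c ^ p ≤ r) :
    a t * h (t - τ) ^ p ≤ r := by
  have hσ : 0 ≤ sig γ τ t := (exp_pos _).le
  have hdelay : h (t - τ) ≤ sig γ τ t * c := by
    rw [mul_comm]
    exact (le_mul_sig_of_monotoneOn hγ hmono hτ ht).trans (mul_le_mul_of_nonneg_right hc hσ)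
  calc a t * h (t - τ) ^ p ≤ a t * (sig γ τ t * c) ^ p :=
        mul_le_mul_of_nonneg_left (rpow_le_rpow hdelay0 hdelay hp) ha
    _ = a t * sig γ τ t ^ p * c ^ p := by rw [mul_rpow hσ (h0.trans hc), mul_assoc]
    _ ≤ r := hr

theorem hasDerivAt_mul_sub_mul_nu {Z h α β : ℝ → ℝ} {τ p q t d : ℝ} (hγ : Continuous γ)
    (hZ : HasDerivAt Z (β t * nu γ t) t) (hh : HasDerivAt h d t)
    (heq : d = γ t * h t + α t * h (t - τ) ^ p + β t) :
    HasDerivAt (fun s => q * Z s - h s * nu γ s)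
      (nu γ t * ((q - 1) * β t - α t * h (t - τ) ^ p)) t :=
  ((hZ.const_mul q).sub (hh.mul (hasDerivAt_nu hγ t))).congr_deriv (by rw [heq]; ring)

end IntegratingFactor

theorem stmt_11_general
    (τ p : ℝ) (hτ : 0 < τ) (hp : 1 < p)
    (γ α β : ℝ → ℝ)
    (hγc : Continuous γ) (hβc : Continuous β)
    (hα : ∀ t, 0 ≤ α t) (hβ : ∀ t, 0 ≤ β t)
    (h h' : ℝ → ℝ)
    (hh0 : ∀ t, -τ ≤ t → 0 ≤ h t)
    (hhc : ContinuousOn h (Ici (-τ)))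
    (hhd : ∀ t, 0 ≤ t → HasDerivWithinAt h (h' t) (Ici (0:ℝ)) t)
    (hheq : ∀ t, 0 ≤ t → h' t = γ t * h t + α t * h (t - τ) ^ p + β t)
    (hhτ : 0 < h τ)
    (q : ℝ) (hq : 1 < q)
    (ζ : ℝ → ℝ)
    (hζ : ∀ t, τ ≤ t →
      ζ t = (h τ * nu γ τ + ∫ ξ in τ..t, β ξ * nu γ ξ) / nu γ t)
    (hcond : ∀ t, τ ≤ t → α t * sig γ τ t ^ p * (q * ζ t) ^ p ≤ (q - 1) * β t) :
    ∀ t, τ ≤ t → h t ≤ q * ζ t := by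
  have hd : ∀ x, 0 < x → HasDerivAt h (h' x) x :=
    fun x hx => (hhd x hx.le).hasDerivAt (Ici_mem_nhds hx)
  have hmono : MonotoneOn (fun t => h t * nu γ t) (Ici 0) :=
    monotoneOn_mul_nu hγc (hhc.mono (Ici_subset_Ici.2 (by linarith))) hd fun x hx => by
      rw [hheq x hx.le]
      linarith [hβ x, mul_nonneg (hα x) (rpow_nonneg (hh0 (x - τ) (by linarith)) p)]
  set Z : ℝ → ℝ := fun s => h τ * nu γ τ + ∫ ξ in τ..s, β ξ * nu γ ξ
  have hZ : ∀ s, HasDerivAt Z (β s * nu γ s) s := fun s =>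
    ((hβc.mul (continuous_nu hγc)).integral_hasStrictDerivAt τ s).hasDerivAt.const_add _
  set w : ℝ → ℝ := fun s => q * Z s - h s * nu γ s
  have hlt_of_pos : ∀ x, τ ≤ x → 0 < w x → h x < q * ζ x := fun x hx hwx => by
    rw [hζ x hx, ← mul_div_assoc, lt_div_iff₀ (nu_pos γ x)]
    exact sub_pos.1 hwx
  have hw_cont : ∀ t, ContinuousOn w (Icc τ t) := fun t =>
    ((continuous_iff_continuousAt.2 fun s => (hZ s).continuousAt).continuousOn.const_smul q).sub
      ((hhc.mono fun y hy => mem_Ici.2 (by linarith [hy.1])).mul (continuous_nu hγc).continuousOn)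
  have hwτ : 0 < w τ := by
    have : w τ = (q - 1) * (h τ * nu γ τ) := by
      simp only [w, Z, intervalIntegral.integral_same, add_zero]
      ring
    exact this ▸ mul_pos (sub_pos.2 hq) (mul_pos hhτ (nu_pos γ τ))
  intro t ht
  have hw_pos := pos_of_hasDerivAt_nonneg_of_pos (hw_cont t)
    (fun x hx => hasDerivAt_mul_sub_mul_nu hγc (hZ x) (hd x (hτ.trans hx.1))
      (hheq x (hτ.trans hx.1).le)) hwτ
    (fun x hx hwx => mul_nonneg (nu_pos γ x).le <| sub_nonneg.2 <|
      mul_delay_rpow_le hγc hmono hτ.le hx.1.le (hα x) (by linarith) (hh0 _ (by linarith [hx.1]))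
        (hh0 x (by linarith [hx.1])) (hlt_of_pos x hx.1.le hwx).le (hcond x hx.1.le))
  exact (hlt_of_pos t ht (hw_pos t ⟨ht, le_rfl⟩)).le

/-- Lemma 2.6: if `α σ^p (qζ)^p ≤ (q−1)β` on `[τ,∞)`, where
`ζ(t) = [h(τ)ν(τ) + ∫_τ^t β ν]/ν(t)`, then `h(t) ≤ q ζ(t)` for `t ≥ τ`. -/
theorem stmt_11
    (τ p : ℝ) (hτ : 0 < τ) (hp : 1 < p)
    (γ α β : ℝ → ℝ)
    (hγc : Continuous γ) (hαc : Continuous α) (hβc : Continuous β)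
    (hα : ∀ t, 0 ≤ α t) (hβ : ∀ t, 0 ≤ β t)
    (h h' : ℝ → ℝ)
    (hh0 : ∀ t, -τ ≤ t → 0 ≤ h t)
    (hhc : ContinuousOn h (Ici (-τ)))
    (hhd : ∀ t, 0 ≤ t → HasDerivWithinAt h (h' t) (Ici (0:ℝ)) t)
    (hheq : ∀ t, 0 ≤ t → h' t = γ t * h t + α t * h (t - τ) ^ p + β t)
    (hhτ : 0 < h τ)
    (q : ℝ) (hq : 1 < q)
    (ζ : ℝ → ℝ)
    (hζ : ∀ t, τ ≤ t →
      ζ t = (h τ * nu γ τ + ∫ ξ in τ..t, β ξ * nu γ ξ) / nu γ t)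
    (hcond : ∀ t, τ ≤ t → α t * sig γ τ t ^ p * (q * ζ t) ^ p ≤ (q - 1) * β t) :
    ∀ t, τ ≤ t → h t ≤ q * ζ t :=
  stmt_11_general τ p hτ hp γ α β hγc hβc hα hβ h h' hh0 hhc hhd hheq hhτ q hq ζ hζ hcond
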